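/- For all strings a, b, u, v over {m_1,…,m_{k+1}}, we have aub ∼ avb if and only if u ∼ v. -/

import Mathlib

/-- A configuration ("state") of a system of `k` stacks in series: container `0`
is the input queue (front at the head of the list), containers `1, …, k` are the
stacks (top at the head), and container `k+1` is the output queue (front at the head). -/
abbrev Conf (k : ℕ) : Type := Fin (k + 2) → List ℕ

/-- Apply the move `m_{i+1}` (for `i : Fin (k+1)`): remove the element at the head of
container `i` and move it to container `i+1` (pushed on top if the destination is a
stack, appended at the back if it is the output queue).  Returns `none` (the illegal
state `∅`) if the source container is empty. -/
def applyMove {k : ℕ} (i : Fin (k + 1)) (s : Conf k) : Option (Conf k) :=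
  match s i.castSucc with
  | [] => none
  | x :: rest =>
      some fun j =>
        if j = i.castSucc then rest
        else if j = i.succ then
          (if (j : ℕ) = k + 1 then s j ++ [x] else x :: s j)
        else s j

/-- The action `w ∗ s` of a string of moves on an (optional) state; moves are applied
left to right, and the illegal state `none` is absorbing. -/
def act {k : ℕ} (w : List (Fin (k + 1))) (s : Option (Conf k)) : Option (Conf k) :=
  w.foldl (fun t i => t.bind (applyMove i)) s

/-- The initial state `I(n,k)`: the input queue holds `1, …, n` (front to back),
and everything else is empty. -/
def initConf (n k : ℕ) : Conf k :=
  fun j => if (j : ℕ) = 0 then List.range' 1 n else []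

/-- The final state whose output queue holds `out` (front to back), all else empty. -/
def finalConf (k : ℕ) (out : List ℕ) : Conf k :=
  fun j => if (j : ℕ) = k + 1 then out else []

/-- `π ∈ Sₙ` is generated by `k` stacks in series if some string of moves takes
`I(n,k)` to the final state with output queue `π(1), …, π(n)` (front to back). -/
def Generates (n k : ℕ) (π : Equiv.Perm (Fin n)) : Prop :=
  ∃ w : List (Fin (k + 1)),
    act w (some (initConf n k)) = some (finalConf k (List.ofFn fun j => (π j : ℕ) + 1))

/-- `P(n,k)`, the set of permutations of `n` elements generated by `k` stacks in series. -/
def GenPerms (n k : ℕ) : Set (Equiv.Perm (Fin n)) := {π | Generates n k π}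

/-- `k_n`, the least number of stacks needed to generate (equivalently, sort) every
permutation of `n` elements. -/
noncomputable def kStacks (n : ℕ) : ℕ := sInf {k | ∀ π : Equiv.Perm (Fin n), Generates n k π}

/-- Two move strings are equivalent, `u ∼ v`, if they act identically on every state. -/
def MoveEquiv {k : ℕ} (u v : List (Fin (k + 1))) : Prop :=
  ∀ s : Conf k, act u (some s) = act v (some s)
-- basics
lemma act_nil {k : ℕ} (s : Option (Conf k)) : act [] s = s := rfl

lemma act_cons {k : ℕ} (i : Fin (k+1)) (w : List (Fin (k+1))) (s : Conf k) :
    act (i :: w) (some s) = act w (applyMove i s) := by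
  simp [act]

lemma act_none {k : ℕ} (w : List (Fin (k+1))) : act w (none : Option (Conf k)) = none := by
  induction w with
  | nil => rfl
  | cons i w ih => simpa [act] using ih

lemma act_append {k : ℕ} (w₁ w₂ : List (Fin (k+1))) (s : Option (Conf k)) :
    act (w₁ ++ w₂) s = act w₂ (act w₁ s) := by
  simp [act, List.foldl_append]

lemma applyMove_eq_none {k : ℕ} (i : Fin (k+1)) (s : Conf k) :
    applyMove i s = none ↔ s i.castSucc = [] := by
  cases h : s i.castSucc <;> simp [applyMove, h]

lemma applyMove_of_cons {k : ℕ} (i : Fin (k+1)) (s : Conf k) {x : ℕ} {rest : List ℕ}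
    (h : s i.castSucc = x :: rest) :
    applyMove i s = some fun j =>
        if j = i.castSucc then rest
        else if j = i.succ then
          (if (j : ℕ) = k + 1 then s j ++ [x] else x :: s j)
        else s j := by
  simp [applyMove, h]

lemma castSucc_ne_succ {k : ℕ} (i : Fin (k+1)) : i.castSucc ≠ i.succ :=
  (Fin.castSucc_lt_succ).ne

lemma applyMove_inj {k : ℕ} (i : Fin (k+1)) {s₁ s₂ t : Conf k}
    (h₁ : applyMove i s₁ = some t) (h₂ : applyMove i s₂ = some t) : s₁ = s₂ := by
  obtain ⟨x₁, r₁, e₁⟩ : ∃ x r, s₁ i.castSucc = x :: r := by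
    cases h : s₁ i.castSucc with
    | nil => rw [applyMove, h] at h₁; simp at h₁
    | cons x r => exact ⟨x, r, rfl⟩
  obtain ⟨x₂, r₂, e₂⟩ : ∃ x r, s₂ i.castSucc = x :: r := by
    cases h : s₂ i.castSucc with
    | nil => rw [applyMove, h] at h₂; simp at h₂
    | cons x r => exact ⟨x, r, rfl⟩
  rw [applyMove_of_cons i s₁ e₁] at h₁
  rw [applyMove_of_cons i s₂ e₂] at h₂
  have ht1 := Option.some.inj h₁
  have ht2 := Option.some.inj h₂
  have ht := ht1.trans ht2.symm
  -- evaluate at i.castSucc : r₁ = r₂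
  have hr : r₁ = r₂ := by
    have := congrFun ht i.castSucc
    simpa using this
  have hne := castSucc_ne_succ i
  have hsucc := congrFun ht i.succ
  simp [if_neg (Ne.symm hne)] at hsucc
  have hxs : x₁ = x₂ ∧ s₁ i.succ = s₂ i.succ := by
    by_cases hout : (i : ℕ) = k
    · rw [if_pos hout, if_pos hout] at hsucc
      have := List.append_inj' hsucc (by simp)
      exact ⟨by simpa using this.2, this.1⟩
    · rw [if_neg hout, if_neg hout] at hsucc
      exact ⟨(List.cons.injEq _ _ _ _).mp hsucc |>.1, (List.cons.injEq _ _ _ _).mp hsucc |>.2⟩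
  funext j
  by_cases hc : j = i.castSucc
  · subst hc; rw [e₁, e₂, hr, hxs.1]
  · by_cases hs : j = i.succ
    · subst hs; exact hxs.2
    · have := congrFun ht j
      simpa [hc, hs] using this

lemma act_inj {k : ℕ} : ∀ (w : List (Fin (k+1))) {s₁ s₂ t : Conf k},
    act w (some s₁) = some t → act w (some s₂) = some t → s₁ = s₂ := by
  intro w
  induction w with
  | nil => intro s₁ s₂ t h₁ h₂; simp [act] at h₁ h₂; rw [h₁, h₂]
  | cons i w ih =>
    intro s₁ s₂ t h₁ h₂
    rw [act_cons] at h₁ h₂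
    cases e₁ : applyMove i s₁ with
    | none => rw [e₁, act_none] at h₁; exact absurd h₁ (by simp)
    | some r₁ =>
      cases e₂ : applyMove i s₂ with
      | none => rw [e₂, act_none] at h₂; exact absurd h₂ (by simp)
      | some r₂ =>
        rw [e₁] at h₁; rw [e₂] at h₂
        have := ih h₁ h₂
        subst this
        exact applyMove_inj i e₁ e₂

lemma act_total {k : ℕ} : ∀ (w : List (Fin (k+1))) (s : Conf k),
    (∀ j : Fin (k+2), (j : ℕ) ≤ k → w.length ≤ (s j).length) →
    ∃ t, act w (some s) = some t ∧
      ∀ j : Fin (k+2), (j : ℕ) ≤ k → (s j).length ≤ (t j).length + w.length := by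
  intro w
  induction w with
  | nil => intro s _; exact ⟨s, rfl, fun j _ => by simp⟩
  | cons i w ih =>
    intro s hs
    have hik : ((i.castSucc : Fin (k+2)) : ℕ) ≤ k := by
      rw [Fin.coe_castSucc]; omega
    have hlen : 1 ≤ (s i.castSucc).length := le_trans (by simp) (hs i.castSucc hik)
    obtain ⟨x, rest, e⟩ : ∃ x r, s i.castSucc = x :: r := by
      cases h : s i.castSucc with
      | nil => rw [h] at hlen; simp at hlen
      | cons x r => exact ⟨x, r, rfl⟩
    set s₁ : Conf k := fun j =>
        if j = i.castSucc then rest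
        else if j = i.succ then
          (if (j : ℕ) = k + 1 then s j ++ [x] else x :: s j)
        else s j with hs₁
    have happ : applyMove i s = some s₁ := applyMove_of_cons i s e
    have key : ∀ j : Fin (k+2), (s j).length ≤ (s₁ j).length + 1 ∧ (s₁ j).length ≤ (s j).length + 1 := by
      intro j
      by_cases hc : j = i.castSucc
      · rw [hc]
        have h1 : s₁ i.castSucc = rest := by simp [hs₁]
        rw [h1, e]; simp only [List.length_cons]; omega
      · by_cases hu : j = i.succ
        · rw [hu]
          have h1 : s₁ i.succ = (if ((i.succ : Fin (k+2)) : ℕ) = k + 1 then s i.succ ++ [x] else x :: s i.succ) := by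
            simp [hs₁, Ne.symm (castSucc_ne_succ i)]
          rw [h1]
          by_cases ho : ((i.succ : Fin (k+2)) : ℕ) = k + 1
          · rw [if_pos ho]; simp only [List.length_append, List.length_cons, List.length_nil]; omega
          · rw [if_neg ho]; simp only [List.length_cons]; omega
        · have h1 : s₁ j = s j := by simp [hs₁, hc, hu]
          rw [h1]; omega
    have hlen₁ : ∀ j : Fin (k+2), (j : ℕ) ≤ k → w.length ≤ (s₁ j).length := by
      intro j hj
      have := hs j hj
      have := (key j).1
      simp only [List.length_cons] at *
      omega
    obtain ⟨t, ht, htl⟩ := ih s₁ hlen₁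
    refine ⟨t, by rw [act_cons, happ]; exact ht, ?_⟩
    intro j hj
    have h1 := htl j hj
    have := (key j).1
    simp only [List.length_cons] at *
    omega

/-- Pad each container: stacks and input at the tail (bottom/back), output at the front. -/
def padC {k : ℕ} (p : Fin (k+2) → List ℕ) (s : Conf k) : Conf k :=
  fun j => if (j : ℕ) = k + 1 then p j ++ s j else s j ++ p j

lemma applyMove_pad {k : ℕ} (p : Fin (k+2) → List ℕ) (i : Fin (k+1)) {s t : Conf k}
    (h : applyMove i s = some t) :
    applyMove i (padC p s) = some (padC p t) := by
  obtain ⟨x, rest, e⟩ : ∃ x r, s i.castSucc = x :: r := by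
    cases hh : s i.castSucc with
    | nil => rw [applyMove, hh] at h; simp at h
    | cons x r => exact ⟨x, r, rfl⟩
  rw [applyMove_of_cons i s e] at h
  have ht := Option.some.inj h
  subst ht
  have hcs : ((i : ℕ)) ≠ k + 1 := by omega
  have e' : padC p s i.castSucc = x :: (rest ++ p i.castSucc) := by
    simp [padC, hcs, e]
  rw [applyMove_of_cons i (padC p s) e']
  congr 1
  funext j
  by_cases hc : j = i.castSucc
  · subst hc
    simp [padC, hcs]
  · by_cases hu : j = i.succ
    · subst hu
      by_cases ho : ((i : ℕ)) + 1 = k + 1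
      · simp [padC, Ne.symm (castSucc_ne_succ i), ho, hc]
      · simp [padC, Ne.symm (castSucc_ne_succ i), ho, hc, show (i : ℕ) ≠ k by omega]
    · simp [padC, hc, hu]

lemma act_pad {k : ℕ} (p : Fin (k+2) → List ℕ) :
    ∀ (w : List (Fin (k+1))) {s t : Conf k},
      act w (some s) = some t → act w (some (padC p s)) = some (padC p t) := by
  intro w
  induction w with
  | nil => intro s t h; simpa [act] using congrArg (Option.map (padC p)) h
  | cons i w ih =>
    intro s t h
    rw [act_cons] at h ⊢
    cases e : applyMove i s with
    | none => rw [e, act_none] at h; exact absurd h (by simp)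
    | some s₁ =>
      rw [e] at h
      rw [applyMove_pad p i e]
      exact ih h

lemma exists_preimage {k : ℕ} : ∀ (a : List (Fin (k+1))) (t : Conf k),
    (∀ j : Fin (k+2), 1 ≤ (j : ℕ) → a.length ≤ (t j).length) →
    ∃ s₀ : Conf k, act a (some s₀) = some t ∧
      ∀ j : Fin (k+2), 1 ≤ (j : ℕ) → (t j).length ≤ (s₀ j).length + a.length := by
  intro a
  induction a with
  | nil => intro t _; exact ⟨t, rfl, fun j _ => by simp⟩
  | cons i a ih =>
    intro t ht
    obtain ⟨s₁, h₁, hlen⟩ := ih t (fun j hj => le_trans (by simp) (ht j hj))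
    have hs1 : 1 ≤ ((i.succ : Fin (k+2)) : ℕ) := by simp
    have hne : 1 ≤ (s₁ i.succ).length := by
      have h2 := ht i.succ hs1
      have h3 := hlen i.succ hs1
      simp only [List.length_cons] at h2
      omega
    -- obtain the element to pull back
    obtain ⟨x, ys, hx⟩ : ∃ x ys, s₁ i.succ =
        (if ((i.succ : Fin (k+2)) : ℕ) = k + 1 then ys ++ [x] else x :: ys) := by
      by_cases ho : ((i.succ : Fin (k+2)) : ℕ) = k + 1
      · obtain ⟨ys, x, h⟩ := (List.eq_nil_or_concat (s₁ i.succ)).resolve_left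
          (by intro h; rw [h] at hne; simp at hne)
        exact ⟨x, ys, by rw [if_pos ho]; simpa [List.concat_eq_append] using h⟩
      · cases h : s₁ i.succ with
        | nil => exact absurd (by rw [h]; simp : (s₁ i.succ).length = 0) (by omega)
        | cons y l => exact ⟨y, l, by rw [if_neg ho]⟩
    set s₀ : Conf k := fun j =>
      if j = i.castSucc then x :: s₁ j
      else if j = i.succ then ys else s₁ j with hs₀
    have e : s₀ i.castSucc = x :: s₁ i.castSucc := by simp [hs₀]
    have happ : applyMove i s₀ = some s₁ := by
      rw [applyMove_of_cons i s₀ e]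
      congr 1
      funext j
      by_cases hc : j = i.castSucc
      · subst hc; simp
      · by_cases hu : j = i.succ
        · subst hu
          rw [if_neg hc, if_pos rfl]
          have hy : s₀ i.succ = ys := by simp [hs₀, Ne.symm (castSucc_ne_succ i)]
          by_cases ho : ((i.succ : Fin (k+2)) : ℕ) = k + 1
          · rw [if_pos ho, hy, hx, if_pos ho]
          · rw [if_neg ho, hy, hx, if_neg ho]
        · simp [hs₀, hc, hu]
    refine ⟨s₀, by rw [act_cons, happ]; exact h₁, ?_⟩
    intro j hj
    have h3 := hlen j hj
    by_cases hc : j = i.castSucc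
    · subst hc
      have : s₀ i.castSucc = x :: s₁ i.castSucc := e
      rw [this]
      simp only [List.length_cons] at *
      omega
    · by_cases hu : j = i.succ
      · subst hu
        have hy : s₀ i.succ = ys := by simp [hs₀, Ne.symm (castSucc_ne_succ i)]
        have : (s₁ i.succ).length = ys.length + 1 := by
          rw [hx]; split <;> simp
        rw [hy]
        simp only [List.length_cons] at *
        omega
      · have : s₀ j = s₁ j := by simp [hs₀, hc, hu]
        rw [this]
        simp only [List.length_cons] at *
        omega

/-- Elements of the result come from elements of the source. -/
lemma mem_of_applyMove {k : ℕ} {i : Fin (k+1)} {s t : Conf k}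
    (h : applyMove i s = some t) {x : ℕ} (hx : ∃ j, x ∈ t j) : ∃ j, x ∈ s j := by
  obtain ⟨y, rest, e⟩ : ∃ y r, s i.castSucc = y :: r := by
    cases hh : s i.castSucc with
    | nil => rw [applyMove, hh] at h; simp at h
    | cons y r => exact ⟨y, r, rfl⟩
  rw [applyMove_of_cons i s e] at h
  have ht := Option.some.inj h
  subst ht
  obtain ⟨j, hj⟩ := hx
  by_cases hc : j = i.castSucc
  · subst hc; simp at hj
    exact ⟨i.castSucc, by rw [e]; simp [hj]⟩
  · by_cases hu : j = i.succ
    · subst hu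
      simp [Ne.symm (castSucc_ne_succ i)] at hj
      split at hj
      · rcases List.mem_append.mp hj with h' | h'
        · exact ⟨i.succ, h'⟩
        · simp at h'; exact ⟨i.castSucc, by rw [e]; simp [h']⟩
      · rcases List.mem_cons.mp hj with h' | h'
        · exact ⟨i.castSucc, by rw [e]; simp [h']⟩
        · exact ⟨i.succ, h'⟩
    · simp [hc, hu] at hj
      exact ⟨j, hj⟩

lemma mem_of_act {k : ℕ} : ∀ (w : List (Fin (k+1))) {s t : Conf k},
    act w (some s) = some t → ∀ {x : ℕ}, (∃ j, x ∈ t j) → ∃ j, x ∈ s j := by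
  intro w
  induction w with
  | nil => intro s t h x hx; simp [act] at h; rwa [h]
  | cons i w ih =>
    intro s t h x hx
    rw [act_cons] at h
    cases e : applyMove i s with
    | none => rw [e, act_none] at h; exact absurd h (by simp)
    | some s₁ =>
      rw [e] at h
      exact mem_of_applyMove e (ih h hx)

/-- Elements only flow forward. -/
lemma mem_forward_applyMove {k : ℕ} {i : Fin (k+1)} {s t : Conf k}
    (h : applyMove i s = some t) {c x : ℕ}
    (hx : ∃ j : Fin (k+2), c ≤ (j : ℕ) ∧ x ∈ s j) :
    ∃ j : Fin (k+2), c ≤ (j : ℕ) ∧ x ∈ t j := by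
  obtain ⟨y, rest, e⟩ : ∃ y r, s i.castSucc = y :: r := by
    cases hh : s i.castSucc with
    | nil => rw [applyMove, hh] at h; simp at h
    | cons y r => exact ⟨y, r, rfl⟩
  rw [applyMove_of_cons i s e] at h
  have ht := Option.some.inj h
  subst ht
  obtain ⟨j, hj, hmem⟩ := hx
  by_cases hc : j = i.castSucc
  · subst hc
    rw [e] at hmem
    rcases List.mem_cons.mp hmem with h' | h'
    · -- the moved element: goes to i.succ
      refine ⟨i.succ, ?_, ?_⟩
      · rw [Fin.val_succ]
        rw [Fin.coe_castSucc] at hj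
        omega
      · subst h'
        simp [Ne.symm (castSucc_ne_succ i)]
        split <;> simp
    · exact ⟨i.castSucc, hj, by simp [h']⟩
  · by_cases hu : j = i.succ
    · subst hu
      refine ⟨i.succ, hj, ?_⟩
      simp [Ne.symm (castSucc_ne_succ i)]
      split <;> simp [hmem]
    · exact ⟨j, hj, by simp [hc, hu, hmem]⟩

lemma mem_forward_act {k : ℕ} : ∀ (w : List (Fin (k+1))) {s t : Conf k},
    act w (some s) = some t → ∀ {c x : ℕ},
    (∃ j : Fin (k+2), c ≤ (j : ℕ) ∧ x ∈ s j) →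
    ∃ j : Fin (k+2), c ≤ (j : ℕ) ∧ x ∈ t j := by
  intro w
  induction w with
  | nil => intro s t h c x hx; simp [act] at h; rwa [← h]
  | cons i w ih =>
    intro s t h c x hx
    rw [act_cons] at h
    cases e : applyMove i s with
    | none => rw [e, act_none] at h; exact absurd h (by simp)
    | some s₁ =>
      rw [e] at h
      exact ih h (mem_forward_applyMove e hx)

/-- If a run fails, there is a prefix after which the source of the next move is empty. -/
lemma act_none_decomp {k : ℕ} : ∀ (w : List (Fin (k+1))) (s : Conf k),
    act w (some s) = none →
    ∃ (w₁ : List (Fin (k+1))) (i : Fin (k+1)) (w₂ : List (Fin (k+1))) (q : Conf k), w = w₁ ++ i :: w₂ ∧ act w₁ (some s) = some q ∧ q i.castSucc = [] := by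
  intro w
  induction w with
  | nil => intro s h; simp [act] at h
  | cons i w ih =>
    intro s h
    rw [act_cons] at h
    cases e : applyMove i s with
    | none =>
      exact ⟨[], i, w, s, by simp, rfl, (applyMove_eq_none i s).mp e⟩
    | some s₁ =>
      rw [e] at h
      obtain ⟨w₁, i', w₂, q, hw, hq, hempty⟩ := ih s₁ h
      exact ⟨i :: w₁, i', w₂, q, by rw [hw]; rfl, by rw [act_cons, e]; exact hq, hempty⟩

lemma le_foldr_max {x : ℕ} : ∀ {l : List ℕ}, x ∈ l → x ≤ l.foldr max 0 := by
  intro l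
  induction l with
  | nil => intro h; simp at h
  | cons y l ih =>
    intro h
    rcases List.mem_cons.mp h with h | h
    · subst h; simp [le_max_iff]
    · simp [le_max_iff]; right; exact ih h

/-- For all move strings `a, b, u, v`: `aub ∼ avb` iff `u ∼ v`. -/
theorem moveEquiv_cancellation {k : ℕ} (a b u v : List (Fin (k + 1))) :
    MoveEquiv (a ++ u ++ b) (a ++ v ++ b) ↔ MoveEquiv u v := by
  constructor
  · intro H s
    classical
    set M : ℕ := a.length + u.length + v.length + b.length + 1 with hM
    set B : ℕ := (Finset.univ : Finset (Fin (k+2))).sup (fun j => (s j).foldr max 0) + 1 with hB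
    have hfresh : ∀ (x : ℕ) (j : Fin (k+2)), x ∈ s j → x < B := by
      intro x j hx
      have h1 := le_foldr_max hx
      have h2 : (s j).foldr max 0 ≤ (Finset.univ : Finset (Fin (k+2))).sup (fun j => (s j).foldr max 0) :=
        Finset.le_sup (f := fun j => (s j).foldr max 0) (Finset.mem_univ j)
      omega
    set p : Fin (k+2) → List ℕ := fun j => List.replicate M (B + (j : ℕ)) with hp
    set s' : Conf k := padC p s with hs'
    have hs'len : ∀ j : Fin (k+2), (s' j).length = (s j).length + M := by
      intro j
      rw [hs']
      unfold padC
      split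
      · simp [hp, Nat.add_comm]
      · simp [hp]
    obtain ⟨tu, htu, htul⟩ := act_total u s' (fun j _ => by rw [hs'len]; omega)
    obtain ⟨tv, htv, htvl⟩ := act_total v s' (fun j _ => by rw [hs'len]; omega)
    obtain ⟨ru, hru, _⟩ := act_total b tu (fun j hj => by
      have h1 := htul j hj
      have h2 := hs'len j
      omega)
    obtain ⟨rv, hrv, _⟩ := act_total b tv (fun j hj => by
      have h1 := htvl j hj
      have h2 := hs'len j
      omega)
    obtain ⟨s₀, ha, _⟩ := exists_preimage a s' (fun j _ => by rw [hs'len]; omega)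
    have Hs := H s₀
    simp only [act_append] at Hs
    rw [ha, htu, htv, hru, hrv] at Hs
    have htuv : tu = tv := act_inj b hru (by rw [hrv, ← Hs])
    have hww : act u (some s') = act v (some s') := by rw [htu, htv, htuv]
    -- key mismatch lemma
    have key : ∀ w w' : List (Fin (k+1)), act w (some s') = act w' (some s') →
        ∀ t' : Conf k, act w' (some s) = some t' → act w (some s) = none → False := by
      intro w w' hww' t' hw' hwnone
      obtain ⟨w₁, i₀, w₂, q, hw, hq, hqe⟩ := act_none_decomp w s hwnone
      have h1 : act w₁ (some s') = some (padC p q) := act_pad p w₁ hq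
      have hcs' : ((i₀ : ℕ)) ≠ k + 1 := by omega
      have e : padC p q i₀.castSucc =
          (B + (i₀ : ℕ)) :: List.replicate (a.length + u.length + v.length + b.length) (B + (i₀ : ℕ)) := by
        simp [padC, hcs', hqe, hp, hM, List.replicate_succ]
      have happ := applyMove_of_cons i₀ (padC p q) e
      have hend : act w (some s') = some (padC p t') :=
        hww'.trans (act_pad p w' hw')
      have hchain : act w₂ (applyMove i₀ (padC p q)) = some (padC p t') := by
        rw [← hend, hw, act_append, h1, act_cons]
      rw [happ] at hchain
      have hmem : ∃ j : Fin (k+2), (i₀ : ℕ) + 1 ≤ (j : ℕ) ∧ (B + (i₀ : ℕ)) ∈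
          (fun j =>
            if j = i₀.castSucc then List.replicate (a.length + u.length + v.length + b.length) (B + (i₀ : ℕ))
            else if j = i₀.succ then
              (if (j : ℕ) = k + 1 then padC p q j ++ [B + (i₀ : ℕ)] else (B + (i₀ : ℕ)) :: padC p q j)
            else padC p q j) j := by
        refine ⟨i₀.succ, by rw [Fin.val_succ], ?_⟩
        have hne : i₀.succ ≠ i₀.castSucc := Ne.symm (castSucc_ne_succ i₀)
        beta_reduce
        rw [if_neg hne, if_pos (rfl : i₀.succ = i₀.succ)]
        split
        · exact List.mem_append.mpr (Or.inr (by simp))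
        · exact List.mem_cons_self
      obtain ⟨j, hj, hmem'⟩ := mem_forward_act w₂ hchain hmem
      have : (B + (i₀ : ℕ)) ∈ p j ++ t' j ∨ (B + (i₀ : ℕ)) ∈ t' j ++ p j := by
        unfold padC at hmem'
        split at hmem'
        · exact Or.inl hmem'
        · exact Or.inr hmem'
      have hsplit : (B + (i₀ : ℕ)) ∈ t' j ∨ (B + (i₀ : ℕ)) ∈ p j := by
        rcases this with h' | h' <;> rcases List.mem_append.mp h' with h'' | h'' <;> tauto
      rcases hsplit with h' | h'
      · obtain ⟨j', hj'⟩ := mem_of_act w' hw' ⟨j, h'⟩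
        have := hfresh _ _ hj'
        omega
      · have h'' : (i₀ : ℕ) = (j : ℕ) := by simpa [hp] using h'
        omega
    cases hu' : act u (some s) with
    | none =>
      cases hv' : act v (some s) with
      | none => rfl
      | some t_v => exact (key u v hww t_v hv' hu').elim
    | some t_u =>
      cases hv' : act v (some s) with
      | none => exact (key v u hww.symm t_u hu' hv').elim
      | some t_v =>
        have h1 : act u (some s') = some (padC p t_u) := act_pad p u hu'
        have h2 : act v (some s') = some (padC p t_v) := act_pad p v hv'
        have hpc : padC p t_u = padC p t_v := by
          have e1 : tu = padC p t_u := Option.some.inj (htu.symm.trans h1)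
          have e2 : tv = padC p t_v := Option.some.inj (htv.symm.trans h2)
          rw [← e1, ← e2, htuv]
        have : t_u = t_v := by
          funext j
          have hj := congrFun hpc j
          unfold padC at hj
          split at hj
          · exact List.append_cancel_left hj
          · exact List.append_cancel_right hj
        rw [this]
  · intro h s
    simp only [act_append]
    cases e : act a (some s) with
    | none => simp [act_none]
    | some s₁ => rw [h s₁]
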